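/- Fix E > 0 and σ² > 0. Let N be a zero-mean real random variable with probability density, variance σ², and finite differential entropy, and let N_G ∼ N(0, σ²). Then for every zero-mean real random variable X with a probability density, independent of N, with Var(X) ≤ E and X + N of finite differential entropy, the communication rate over the non-Gaussian additive-noise channel satisfies I(X ; X + N) ≤ ½·log(1 + E/σ²) + D(P_N ‖ P_{N_G}). -/

import Mathlib

open MeasureTheory ProbabilityTheory Real
open scoped NNReal ENNReal Classical

noncomputable section

/-- Kullback–Leibler divergence `D(P ‖ Q) = ∫ log (dP/dQ) dP` when `P ≪ Q` and the
integral is well defined; `∞` otherwise. -/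
def klDiv {α : Type*} [MeasurableSpace α] (P Q : Measure α) : EReal :=
  if P ≪ Q ∧ Integrable (fun x => Real.log (P.rnDeriv Q x).toReal) P
  then ((∫ x, Real.log (P.rnDeriv Q x).toReal ∂P : ℝ) : EReal)
  else ⊤

/-- Mutual information `I(X ; Y) = D(P_(X,Y) ‖ P_X ⊗ P_Y)`. -/
def mutualInfo {Ω : Type*} [MeasurableSpace Ω] (μ : Measure Ω) (X Y : Ω → ℝ) : EReal :=
  klDiv (μ.map (fun ω => (X ω, Y ω))) ((μ.map X).prod (μ.map Y))

/-- Differential entropy `h(P) = -∫ f log f` where `f = dP/dx`. -/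
def diffEntropy (P : Measure ℝ) : ℝ :=
  -∫ x, (P.rnDeriv volume x).toReal * Real.log (P.rnDeriv volume x).toReal

/-- `P` has a density and a well-defined, finite differential entropy. -/
def HasFiniteDiffEntropy (P : Measure ℝ) : Prop :=
  P ≪ volume ∧
    Integrable (fun x => (P.rnDeriv volume x).toReal * Real.log (P.rnDeriv volume x).toReal)

/-- The mutual information `I(X ; X + N)` of the additive-noise channel with input law `P`
and noise law `Q`, input and noise being independent (canonical product-space model). -/
def rate (P Q : Measure ℝ) : EReal :=
  mutualInfo (P.prod Q) (fun p => p.1) (fun p => p.1 + p.2)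

/-! By independence, the law of `(X, X + N)` has density `f_N (y - x)` with respect to
`P_X ⊗ Lebesgue`, while `P_X ⊗ P_{X+N}` has density `f_{X+N} (y)`; hence
`I(X ; X + N) = h(X + N) - h(N)`. Gibbs' inequality against the Gaussian with the mean of `X + N`
and variance `E + σ²` gives `h(X + N) ≤ ½ log (2πe (E + σ²))`, and expanding the divergence
against `N(0, σ²)` gives `D(P_N ‖ P_{N_G}) = ½ log (2πσ²) + E[N²] / (2σ²) - h(N)`, where
`E[N²] ≥ σ²`. -/

section WithDensity

variable {α β : Type*} [MeasurableSpace α] [MeasurableSpace β]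

lemma MeasureTheory.MeasurePreserving.map_withDensity {ρ : Measure α} {ρ' : Measure β}
    {e : α ≃ᵐ β} (he : MeasurePreserving e ρ ρ') (k : α → ℝ≥0∞) :
    (ρ.withDensity k).map e = ρ'.withDensity (k ∘ e.symm) := by
  ext s hs
  rw [Measure.map_apply e.measurable hs, withDensity_apply _ (e.measurable hs),
    withDensity_apply _ hs, ← he.setLIntegral_comp_preimage_emb e.measurableEmbedding]
  simp

lemma withDensity_eq_withDensity_withDensity_div {ρ : Measure α} {f g : α → ℝ≥0∞}
    (hf : Measurable f) (hg : Measurable g)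
    (hg_pos : ∀ᵐ x ∂ρ.withDensity f, g x ≠ 0 ∧ g x ≠ ∞) :
    ρ.withDensity f = (ρ.withDensity g).withDensity (f / g) := by
  rw [← withDensity_mul _ hg (hf.div hg)]
  refine withDensity_congr_ae ?_
  filter_upwards [(ae_withDensity_iff hf).mp hg_pos] with x hx
  by_cases hfx : f x = 0
  · simp [hfx]
  · exact (ENNReal.mul_div_cancel (hx hfx).1 (hx hfx).2).symm

lemma ae_withDensity_ne_zero_ne_top {ρ : Measure α} {f : α → ℝ≥0∞} (hf : Measurable f)
    [IsFiniteMeasure (ρ.withDensity f)] :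
    ∀ᵐ x ∂ρ.withDensity f, f x ≠ 0 ∧ f x ≠ ∞ := by
  have hfin : ∀ᵐ x ∂ρ, f x < ∞ := by
    refine ae_lt_top hf ?_
    rw [← setLIntegral_univ, ← withDensity_apply _ MeasurableSet.univ]
    exact measure_ne_top _ _
  rw [ae_withDensity_iff hf]
  filter_upwards [hfin] with x hx hx0 using ⟨hx0, hx.ne⟩

end WithDensity

section KullbackLeibler

variable {α : Type*} [MeasurableSpace α]

lemma klDiv_nonneg (P Q : Measure α) [IsProbabilityMeasure P] [IsProbabilityMeasure Q] :
    0 ≤ klDiv P Q := by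
  unfold klDiv
  split_ifs with h
  · have := InformationTheory.integral_llr_add_sub_measure_univ_nonneg h.1 h.2
    simp only [probReal_univ, add_sub_cancel_right] at this
    exact EReal.coe_nonneg.mpr this
  · exact le_top

lemma klDiv_eq_integral_log_sub_of_eq_withDensity {ρ P Q : Measure α} [IsFiniteMeasure P]
    [SigmaFinite Q] {f g : α → ℝ≥0∞} (hf : Measurable f) (hg : Measurable g)
    (hP : P = ρ.withDensity f) (hQ : Q = ρ.withDensity g)
    (hg_pos : ∀ᵐ x ∂P, g x ≠ 0 ∧ g x ≠ ∞)
    (hf_int : Integrable (fun x => log (f x).toReal) P)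
    (hg_int : Integrable (fun x => log (g x).toReal) P) :
    klDiv P Q = ((∫ x, log (f x).toReal ∂P - ∫ x, log (g x).toReal ∂P : ℝ) : EReal) := by
  have hPQ : P = Q.withDensity (f / g) := by
    subst hP hQ
    exact withDensity_eq_withDensity_withDensity_div hf hg hg_pos
  have hf_pos : ∀ᵐ x ∂P, f x ≠ 0 ∧ f x ≠ ∞ := by
    subst hP
    exact ae_withDensity_ne_zero_ne_top hf
  have hac : P ≪ Q := hPQ ▸ withDensity_absolutelyContinuous Q _
  have hrn : P.rnDeriv Q =ᵐ[P] f / g := by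
    refine hac.ae_le ?_
    rw [hPQ]
    exact Measure.rnDeriv_withDensity Q (hf.div hg)
  have hlog : (fun x => log (P.rnDeriv Q x).toReal) =ᵐ[P]
      fun x => log (f x).toReal - log (g x).toReal := by
    filter_upwards [hrn, hf_pos, hg_pos] with x hx hfx hgx
    rw [hx, Pi.div_apply, ENNReal.toReal_div,
      log_div (ENNReal.toReal_pos hfx.1 hfx.2).ne' (ENNReal.toReal_pos hgx.1 hgx.2).ne']
  rw [klDiv, if_pos ⟨hac, (hf_int.sub hg_int).congr hlog.symm⟩, integral_congr_ae hlog,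
    integral_sub hf_int hg_int]

end KullbackLeibler

section DiffEntropy

lemma integral_log_rnDeriv_volume {P : Measure ℝ} [SigmaFinite P] (hP : P ≪ volume) :
    ∫ x, log (P.rnDeriv volume x).toReal ∂P = -diffEntropy P := by
  have h := integral_withDensity_eq_integral_toReal_smul (Measure.measurable_rnDeriv P volume)
    (Measure.rnDeriv_lt_top P volume) (fun x => log (P.rnDeriv volume x).toReal)
  rw [Measure.withDensity_rnDeriv_eq _ _ hP] at h
  rw [h, diffEntropy, neg_neg]
  rfl

lemma HasFiniteDiffEntropy.integrable_log_rnDeriv {P : Measure ℝ} [SigmaFinite P]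
    (hP : HasFiniteDiffEntropy P) : Integrable (fun x => log (P.rnDeriv volume x).toReal) P := by
  have h := (integrable_withDensity_iff_integrable_smul' (Measure.measurable_rnDeriv P volume)
    (Measure.rnDeriv_lt_top P volume)).mpr hP.2
  rwa [Measure.withDensity_rnDeriv_eq _ _ hP.1] at h

lemma log_gaussianPDFReal (m : ℝ) {v : ℝ≥0} (hv : v ≠ 0) (x : ℝ) :
    log (gaussianPDFReal m v x) = -(log (2 * π * v) / 2) - (x - m) ^ 2 / (2 * v) := by
  have h2πv : (0 : ℝ) < 2 * π * v := by positivity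
  rw [gaussianPDFReal, log_mul (by positivity) (exp_ne_zero _), log_inv, log_sqrt h2πv.le,
    log_exp]
  ring

lemma klDiv_gaussianReal {P : Measure ℝ} [IsProbabilityMeasure P]
    (hP : HasFiniteDiffEntropy P) (m : ℝ) {v : ℝ≥0} (hv : v ≠ 0)
    (hm : Integrable (fun x => (x - m) ^ 2) P) :
    klDiv P (gaussianReal m v)
      = ((-diffEntropy P + log (2 * π * v) / 2 + (∫ x, (x - m) ^ 2 ∂P) / (2 * v) : ℝ)
        : EReal) := by
  have hlog : (fun x => log (gaussianPDF m v x).toReal)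
      = fun x => -(log (2 * π * v) / 2) - (x - m) ^ 2 / (2 * v) := by
    ext x
    rw [toReal_gaussianPDF, log_gaussianPDFReal m hv]
  have hint : Integrable (fun x => log (gaussianPDF m v x).toReal) P :=
    hlog ▸ (integrable_const _).sub (hm.div_const _)
  rw [klDiv_eq_integral_log_sub_of_eq_withDensity (Measure.measurable_rnDeriv P volume)
    (measurable_gaussianPDF m v) (Measure.withDensity_rnDeriv_eq _ _ hP.1).symm
    (gaussianReal_of_var_ne_zero m hv)
    (ae_of_all _ fun x => ⟨(gaussianPDF_pos m hv x).ne', gaussianPDF_ne_top⟩)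
    hP.integrable_log_rnDeriv hint, integral_log_rnDeriv_volume hP.1, hlog,
    integral_sub (integrable_const _) (hm.div_const _), integral_const, integral_div,
    probReal_univ, one_smul]
  congr 1
  ring

lemma diffEntropy_le_of_variance_le {P : Measure ℝ} [IsProbabilityMeasure P]
    (hP : HasFiniteDiffEntropy P) (hP2 : MemLp id 2 P) {v : ℝ≥0} (hv : 0 < v)
    (hvar : variance id P ≤ v) : diffEntropy P ≤ log (2 * π * v) / 2 + 1 / 2 := by
  set m := ∫ x, x ∂P
  have hvar_eq : variance id P = ∫ x, (x - m) ^ 2 ∂P :=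
    variance_eq_integral measurable_id.aemeasurable
  have hm : Integrable (fun x => (x - m) ^ 2) P := (hP2.sub (memLp_const m)).integrable_sq
  have hkl := klDiv_nonneg P (gaussianReal m v)
  rw [klDiv_gaussianReal hP m hv.ne' hm, EReal.coe_nonneg] at hkl
  have hv' : (0 : ℝ) < v := hv
  have : (∫ x, (x - m) ^ 2 ∂P) / (2 * v) ≤ 1 / 2 := by
    rw [div_le_div_iff₀ (by positivity) two_pos]
    linarith
  linarith

end DiffEntropy

section Channel

lemma mutualInfo_eq_of_map_eq {Ω Ω' : Type*} [MeasurableSpace Ω] [MeasurableSpace Ω']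
    {μ : Measure Ω} {ν : Measure Ω'} {X Y : Ω → ℝ} {X' Y' : Ω' → ℝ}
    (hXY : Measurable fun ω => (X ω, Y ω)) (hXY' : Measurable fun ω => (X' ω, Y' ω))
    (h : μ.map (fun ω => (X ω, Y ω)) = ν.map (fun ω => (X' ω, Y' ω))) :
    mutualInfo μ X Y = mutualInfo ν X' Y' := by
  have hX : μ.map X = ν.map X' := by
    have := congrArg (Measure.map Prod.fst) h
    rwa [Measure.map_map measurable_fst hXY, Measure.map_map measurable_fst hXY'] at this
  have hY : μ.map Y = ν.map Y' := by
    have := congrArg (Measure.map Prod.snd) h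
    rwa [Measure.map_map measurable_snd hXY, Measure.map_map measurable_snd hXY'] at this
  rw [mutualInfo, mutualInfo, h, hX, hY]

lemma ProbabilityTheory.IndepFun.mutualInfo_add_eq_rate {Ω : Type*} [MeasurableSpace Ω]
    {μ : Measure Ω} [IsFiniteMeasure μ] {X N : Ω → ℝ} (hX : Measurable X)
    (hN : Measurable N) (hXN : IndepFun X N μ) :
    mutualInfo μ X (fun ω => X ω + N ω) = rate (μ.map X) (μ.map N) := by
  have hshear : Measurable fun p : ℝ × ℝ => (p.1, p.1 + p.2) := by fun_prop
  refine mutualInfo_eq_of_map_eq (by fun_prop) hshear ?_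
  rw [← (indepFun_iff_map_prod_eq_prod_map_map hX.aemeasurable hN.aemeasurable).mp hXN,
    Measure.map_map hshear (hX.prodMk hN)]
  rfl

end Channel

section ShearCoordinates

variable (P Q : Measure ℝ)

lemma map_shearAddRight_prod_eq_withDensity [SFinite P] [SigmaFinite Q] (hQ : Q ≪ volume) :
    (P.prod Q).map (MeasurableEquiv.shearAddRight ℝ)
      = (P.prod volume).withDensity fun p => Q.rnDeriv volume (-p.1 + p.2) := by
  conv_lhs => rw [← Measure.withDensity_rnDeriv_eq _ _ hQ]
  rw [prod_withDensity_right (Measure.measurable_rnDeriv _ _),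
    (measurePreserving_prod_add P volume).map_withDensity]
  rfl

lemma map_snd_map_shearAddRight_prod :
    ((P.prod Q).map (MeasurableEquiv.shearAddRight ℝ)).map Prod.snd = P ∗ Q := by
  rw [Measure.map_map measurable_snd (MeasurableEquiv.measurable _)]
  rfl

lemma map_neg_add_map_shearAddRight_prod [IsProbabilityMeasure P] [SFinite Q] :
    ((P.prod Q).map (MeasurableEquiv.shearAddRight ℝ)).map (fun p => -p.1 + p.2) = Q := by
  rw [Measure.map_map (by fun_prop) (MeasurableEquiv.measurable _)]
  change (P.prod Q).map (fun p => -p.1 + (p.1 + p.2)) = Q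
  simp only [neg_add_cancel_left]
  rw [Measure.map_snd_prod, measure_univ, one_smul]

lemma rate_eq_klDiv_map_shearAddRight_prod [IsProbabilityMeasure Q] :
    rate P Q = klDiv ((P.prod Q).map (MeasurableEquiv.shearAddRight ℝ)) (P.prod (P ∗ Q)) := by
  simp only [rate, mutualInfo, Measure.map_fst_prod, measure_univ, one_smul]
  rfl

lemma rate_eq_diffEntropy_conv_sub [IsProbabilityMeasure P] [IsProbabilityMeasure Q]
    (hQ : HasFiniteDiffEntropy Q) (hPQ : HasFiniteDiffEntropy (P ∗ Q)) :
    rate P Q = ((diffEntropy (P ∗ Q) - diffEntropy Q : ℝ) : EReal) := by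
  set F := Q.rnDeriv volume
  set H := (P ∗ Q).rnDeriv volume
  set J := (P.prod Q).map (MeasurableEquiv.shearAddRight ℝ)
  have : IsProbabilityMeasure J :=
    Measure.isProbabilityMeasure_map (MeasurableEquiv.measurable _).aemeasurable
  have hJ_snd : J.map Prod.snd = P ∗ Q := map_snd_map_shearAddRight_prod P Q
  have hJ_diff : J.map (fun p => -p.1 + p.2) = Q := map_neg_add_map_shearAddRight_prod P Q
  have hdiff : Measurable fun p : ℝ × ℝ => -p.1 + p.2 := by fun_prop
  have hlogF : Measurable fun x => log (F x).toReal :=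
    measurable_log.comp (Measure.measurable_rnDeriv _ _).ennreal_toReal
  have hlogH : Measurable fun x => log (H x).toReal :=
    measurable_log.comp (Measure.measurable_rnDeriv _ _).ennreal_toReal
  have hH_pos : ∀ᵐ p ∂J, H p.2 ≠ 0 ∧ H p.2 ≠ ∞ := by
    refine ae_of_ae_map (p := fun y => H y ≠ 0 ∧ H y ≠ ∞) measurable_snd.aemeasurable ?_
    rw [hJ_snd]
    filter_upwards [Measure.rnDeriv_pos hPQ.1,
      hPQ.1.ae_le (Measure.rnDeriv_ne_top (P ∗ Q) volume)] with y hy hy' using ⟨hy.ne', hy'⟩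
  have hF_int : Integrable (fun p => log (F (-p.1 + p.2)).toReal) J :=
    (integrable_map_measure hlogF.aestronglyMeasurable hdiff.aemeasurable).mp
      (hJ_diff ▸ hQ.integrable_log_rnDeriv)
  have hH_int : Integrable (fun p => log (H p.2).toReal) J :=
    (integrable_map_measure hlogH.aestronglyMeasurable measurable_snd.aemeasurable).mp
      (hJ_snd ▸ hPQ.integrable_log_rnDeriv)
  have hM : P.prod (P ∗ Q) = (P.prod volume).withDensity fun p => H p.2 := by
    rw [← prod_withDensity_right (Measure.measurable_rnDeriv _ _),
      Measure.withDensity_rnDeriv_eq _ _ hPQ.1]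
  rw [rate_eq_klDiv_map_shearAddRight_prod,
    klDiv_eq_integral_log_sub_of_eq_withDensity (P := J) (Q := P.prod (P ∗ Q))
      (f := fun p => F (-p.1 + p.2)) (g := fun p => H p.2)
      ((Measure.measurable_rnDeriv _ _).comp hdiff)
      ((Measure.measurable_rnDeriv _ _).comp measurable_snd)
      (map_shearAddRight_prod_eq_withDensity P Q hQ.1) hM hH_pos hF_int hH_int,
    ← integral_map hdiff.aemeasurable hlogF.aestronglyMeasurable, hJ_diff,
    ← integral_map measurable_snd.aemeasurable hlogH.aestronglyMeasurable, hJ_snd,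
    integral_log_rnDeriv_volume hQ.1, integral_log_rnDeriv_volume hPQ.1]
  congr 1
  ring

end ShearCoordinates

theorem rate_le_log_one_add_add_klDiv_gaussianReal (P Q : Measure ℝ) [IsProbabilityMeasure P]
    [IsProbabilityMeasure Q] {E σ2 : ℝ≥0} (hσ2 : 0 < σ2) (hQ : HasFiniteDiffEntropy Q)
    (hQ2 : Integrable (fun x => x ^ 2) Q) (hσQ : (σ2 : ℝ) ≤ ∫ x, x ^ 2 ∂Q)
    (hPQ : HasFiniteDiffEntropy (P ∗ Q)) (hPQ2 : MemLp id 2 (P ∗ Q))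
    (hvar : variance id (P ∗ Q) ≤ (E + σ2 : ℝ≥0)) :
    rate P Q ≤ ((log (1 + E / σ2) / 2 : ℝ) : EReal) + klDiv Q (gaussianReal 0 σ2) := by
  have hσ2' : (0 : ℝ) < σ2 := hσ2
  have hmax := diffEntropy_le_of_variance_le hPQ hPQ2 (add_pos_of_nonneg_of_pos E.2 hσ2) hvar
  have hlog : log (2 * π * (E + σ2 : ℝ≥0)) = log (1 + E / σ2) + log (2 * π * σ2) := by
    rw [← log_mul (by positivity) (by positivity)]
    congr 1
    push_cast
    field_simp
    ring
  have hmoment : 1 / 2 ≤ (∫ x, x ^ 2 ∂Q) / (2 * σ2) := by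
    rw [div_le_div_iff₀ two_pos (by positivity)]
    linarith
  rw [rate_eq_diffEntropy_conv_sub P Q hQ hPQ,
    klDiv_gaussianReal hQ 0 hσ2.ne' (by simpa only [sub_zero] using hQ2)]
  simp only [sub_zero, ← EReal.coe_add, EReal.coe_le_coe_iff]
  linarith

theorem stmt_8_general {Ω : Type*} [MeasurableSpace Ω] (μ : Measure Ω) [IsProbabilityMeasure μ]
    (E σ2 : ℝ≥0) (hσ2 : 0 < σ2)
    (X N : Ω → ℝ) (hX : Measurable X) (hN : Measurable N)
    (hNL2 : MemLp N 2 μ) (hNvar : variance N μ = (σ2 : ℝ))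
    (hNent : HasFiniteDiffEntropy (μ.map N))
    (hXL2 : MemLp X 2 μ) (hXvar : variance X μ ≤ (E : ℝ))
    (hXN : IndepFun X N μ)
    (hSent : HasFiniteDiffEntropy (μ.map (fun ω => X ω + N ω))) :
    mutualInfo μ X (fun ω => X ω + N ω)
      ≤ ((Real.log (1 + (E : ℝ) / (σ2 : ℝ)) / 2 : ℝ) : EReal)
        + klDiv (μ.map N) (gaussianReal 0 σ2) := by
  have := Measure.isProbabilityMeasure_map (μ := μ) hX.aemeasurable
  have := Measure.isProbabilityMeasure_map (μ := μ) hN.aemeasurable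
  have hY : Measurable fun ω => X ω + N ω := hX.add hN
  have hconv : μ.map (fun ω => X ω + N ω) = μ.map X ∗ μ.map N :=
    hXN.map_add_eq_map_conv_map hX hN
  have hσN : (σ2 : ℝ) ≤ ∫ x, x ^ 2 ∂μ.map N := by
    rw [integral_map hN.aemeasurable (by fun_prop), ← hNvar]
    exact variance_le_expectation_sq hN.aestronglyMeasurable
  have hvar : variance id (μ.map X ∗ μ.map N) ≤ (E + σ2 : ℝ≥0) := by
    rw [← hconv, variance_id_map hY.aemeasurable, ← Pi.add_def, hXN.variance_add hXL2 hNL2]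
    push_cast
    linarith
  rw [hXN.mutualInfo_add_eq_rate hX hN]
  exact rate_le_log_one_add_add_klDiv_gaussianReal _ _ hσ2 hNent
    ((integrable_map_measure (by fun_prop) hN.aemeasurable).mpr hNL2.integrable_sq) hσN
    (hconv ▸ hSent)
    (hconv ▸ (memLp_map_measure_iff aestronglyMeasurable_id hY.aemeasurable).mpr (hXL2.add hNL2))
    hvar

/-- Any zero-mean input `X` with density and variance at most `E` over the
channel with noise `N` satisfies
`I(X ; X+N) ≤ ½ log (1 + E/σ²) + D(P_N ‖ P_{N_G})`. -/
theorem stmt_8 {Ω : Type*} [MeasurableSpace Ω] (μ : Measure Ω) [IsProbabilityMeasure μ]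
    (E σ2 : ℝ≥0) (hE : 0 < E) (hσ2 : 0 < σ2)
    (X N : Ω → ℝ) (hX : Measurable X) (hN : Measurable N)
    (hNac : μ.map N ≪ volume)
    (hNint : Integrable N μ) (hNmean : ∫ ω, N ω ∂μ = 0)
    (hNL2 : MemLp N 2 μ) (hNvar : variance N μ = (σ2 : ℝ))
    (hNent : HasFiniteDiffEntropy (μ.map N))
    (hXac : μ.map X ≪ volume)
    (hXint : Integrable X μ) (hXmean : ∫ ω, X ω ∂μ = 0)
    (hXL2 : MemLp X 2 μ) (hXvar : variance X μ ≤ (E : ℝ))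
    (hXN : IndepFun X N μ)
    (hSent : HasFiniteDiffEntropy (μ.map (fun ω => X ω + N ω))) :
    mutualInfo μ X (fun ω => X ω + N ω)
      ≤ ((Real.log (1 + (E : ℝ) / (σ2 : ℝ)) / 2 : ℝ) : EReal)
        + klDiv (μ.map N) (gaussianReal 0 σ2) :=
  stmt_8_general μ E σ2 hσ2 X N hX hN hNL2 hNvar hNent hXL2 hXvar hXN hSent
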